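/- arXiv:1212.1506 — 2 statements merged into one kernel-verified Lean document; each statement's English description precedes it below -/
import Mathlib

section
/- Let N ≥ 1 and λ : ℝ → [0, Λ₀] with c₁Λ₀ ≤ N/2, c₁ > 0, and D(s,t) = exp(c₁∫_s^t λ(ν)dν). Then for all s real, ∫_{max(s,0)}^∞ (1+t)·e^{−Nt}·D(s,t) dt ≤ (2/N)·(1+max(s,0))·e^{−N·max(s,0)}·D(s,max(s,0)) + (4/N²)·e^{−N·max(s,0)}·D(s,max(s,0)). -/
/-! Since `c₁ λ ≤ N / 2`, the weight `D(s, t) = exp (c₁ ∫_s^t λ)` grows at most like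
`D(s, m) e^{(N/2)(t - m)}` beyond `m = max s 0`. The integrand is therefore dominated by
`D(s, m) e^{-(N/2) m} (1 + t) e^{-(N/2) t}`, whose integral over `[m, ∞)` is computed exactly from
the antiderivative `-e^{-a t} ((1 + t) / a + 1 / a²)` with `a = N / 2`. -/

open Real MeasureTheory intervalIntegral Filter Set Topology

section ExpWeight

variable {a : ℝ}

lemma hasDerivAt_neg_exp_mul_one_add (ha : a ≠ 0) (t : ℝ) :
    HasDerivAt (fun t => -(exp (-(a * t)) * ((1 + t) / a + 1 / a ^ 2)))
      ((1 + t) * exp (-(a * t))) t := by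
  have hexp : HasDerivAt (fun t => exp (-(a * t))) (exp (-(a * t)) * -(a * 1)) t :=
    ((hasDerivAt_id t).const_mul a).neg.exp
  have hpoly : HasDerivAt (fun t => (1 + t) / a + 1 / a ^ 2) (1 / a) t := by
    simpa using (((hasDerivAt_id t).const_add 1).div_const a).add_const (1 / a ^ 2)
  refine (hexp.mul hpoly).neg.congr_deriv ?_
  field_simp
  ring

lemma tendsto_neg_exp_mul_one_add (ha : 0 < a) :
    Tendsto (fun t => -(exp (-(a * t)) * ((1 + t) / a + 1 / a ^ 2))) atTop (𝓝 0) := by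
  have hat : Tendsto (fun t => a * t) atTop atTop := tendsto_id.const_mul_atTop ha
  have hlin : Tendsto (fun t => a * t * exp (-(a * t))) atTop (𝓝 0) := by
    simpa only [Function.comp_def, pow_one] using (tendsto_pow_mul_exp_neg_atTop_nhds_zero 1).comp hat
  have hexp : Tendsto (fun t => exp (-(a * t))) atTop (𝓝 0) :=
    tendsto_exp_neg_atTop_nhds_zero.comp hat
  have h := ((hlin.const_mul (1 / a ^ 2)).add (hexp.const_mul (1 / a + 1 / a ^ 2))).neg
  simp only [mul_zero, add_zero, neg_zero] at h
  refine h.congr fun t => ?_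
  field_simp
  ring

variable {m : ℝ}

lemma one_add_mul_exp_neg_nonneg (hm : -1 ≤ m) : ∀ t ∈ Ioi m, 0 ≤ (1 + t) * exp (-(a * t)) :=
  fun t ht => mul_nonneg (by linarith [ht.out]) (exp_pos _).le

lemma integrableOn_Ioi_one_add_mul_exp_neg (ha : 0 < a) (hm : -1 ≤ m) :
    IntegrableOn (fun t => (1 + t) * exp (-(a * t))) (Ioi m) :=
  integrableOn_Ioi_deriv_of_nonneg
    (hasDerivAt_neg_exp_mul_one_add ha.ne' m).continuousAt.continuousWithinAt
    (fun t _ => hasDerivAt_neg_exp_mul_one_add ha.ne' t) (one_add_mul_exp_neg_nonneg hm)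
    (tendsto_neg_exp_mul_one_add ha)

lemma integral_Ioi_one_add_mul_exp_neg (ha : 0 < a) (hm : -1 ≤ m) :
    ∫ t in Ioi m, (1 + t) * exp (-(a * t)) = exp (-(a * m)) * ((1 + m) / a + 1 / a ^ 2) := by
  rw [integral_Ioi_of_hasDerivAt_of_nonneg
    (hasDerivAt_neg_exp_mul_one_add ha.ne' m).continuousAt.continuousWithinAt
    (fun t _ => hasDerivAt_neg_exp_mul_one_add ha.ne' t) (one_add_mul_exp_neg_nonneg hm)
    (tendsto_neg_exp_mul_one_add ha)]
  ring

end ExpWeight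

lemma setIntegral_Ici_one_add_mul_exp_mul_le {N κ C m : ℝ} {D : ℝ → ℝ} (hκ : κ < N)
    (hm : -1 ≤ m) (hD0 : ∀ t ∈ Ici m, 0 ≤ D t)
    (hD : ∀ t ∈ Ici m, D t ≤ C * exp (κ * (t - m))) :
    ∫ t in Ici m, (1 + t) * exp (-N * t) * D t
      ≤ C * exp (-N * m) * ((1 + m) / (N - κ) + 1 / (N - κ) ^ 2) := by
  have hNκ : 0 < N - κ := sub_pos.mpr hκ
  have hdom : ∀ t ∈ Ici m, (1 + t) * exp (-N * t) * D t
      ≤ C * exp (-(κ * m)) * ((1 + t) * exp (-((N - κ) * t))) := by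
    intro t ht
    have h1t : 0 ≤ 1 + t := by linarith [ht.out]
    have hexp : exp (-N * t) * exp (κ * (t - m)) = exp (-(κ * m)) * exp (-((N - κ) * t)) := by
      rw [← exp_add, ← exp_add]
      ring_nf
    calc (1 + t) * exp (-N * t) * D t ≤ (1 + t) * exp (-N * t) * (C * exp (κ * (t - m))) := by
          gcongr
          exact hD t ht
      _ = C * exp (-(κ * m)) * ((1 + t) * exp (-((N - κ) * t))) := by
          linear_combination (1 + t) * C * hexp
  calc ∫ t in Ici m, (1 + t) * exp (-N * t) * D t
        ≤ ∫ t in Ici m, C * exp (-(κ * m)) * ((1 + t) * exp (-((N - κ) * t))) :=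
          setIntegral_mono_of_nonneg
            (fun t ht => mul_nonneg (mul_nonneg (by linarith [ht.out]) (exp_pos _).le) (hD0 t ht))
            hdom
            (by
              rw [integrableOn_Ici_iff_integrableOn_Ioi]
              exact (integrableOn_Ioi_one_add_mul_exp_neg hNκ hm).const_mul _)
    _ = C * exp (-N * m) * ((1 + m) / (N - κ) + 1 / (N - κ) ^ 2) := by
          rw [MeasureTheory.integral_const_mul, setIntegral_congr_set Ioi_ae_eq_Ici.symm,
            integral_Ioi_one_add_mul_exp_neg hNκ hm]
          have hexp : exp (-(κ * m)) * exp (-((N - κ) * m)) = exp (-N * m) := by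
            rw [← exp_add]
            ring_nf
          linear_combination C * ((1 + m) / (N - κ) + 1 / (N - κ) ^ 2) * hexp

lemma intervalIntegrable_of_norm_le {l : ℝ → ℝ} {Λ : ℝ} (hl : AEStronglyMeasurable l)
    (hb : ∀ ν, ‖l ν‖ ≤ Λ) (u v : ℝ) : IntervalIntegrable l volume u v :=
  intervalIntegrable_const.mono_fun' hl.restrict (ae_of_all _ hb)

lemma exp_mul_integral_le {l : ℝ → ℝ} {Λ c κ s m t : ℝ} (hc : 0 ≤ c) (hκ : c * Λ ≤ κ)
    (hsm : IntervalIntegrable l volume s m) (hmt : IntervalIntegrable l volume m t)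
    (hb : ∀ ν, l ν ≤ Λ) (h : m ≤ t) :
    exp (c * ∫ ν in s..t, l ν) ≤ exp (c * ∫ ν in s..m, l ν) * exp (κ * (t - m)) := by
  have hint : ∫ ν in m..t, l ν ≤ Λ * (t - m) := by
    simpa [mul_comm] using integral_mono_on h hmt intervalIntegrable_const fun ν _ => hb ν
  have hgrowth : c * ∫ ν in m..t, l ν ≤ κ * (t - m) :=
    calc c * ∫ ν in m..t, l ν ≤ c * (Λ * (t - m)) := by gcongr
      _ = c * Λ * (t - m) := by ring
      _ ≤ κ * (t - m) := by gcongr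
  rw [← exp_add, exp_le_exp, ← integral_add_adjacent_intervals hsm hmt, mul_add]
  linarith

theorem stmt12 (N Λ₀ c₁ : ℝ) (hN : 1 ≤ N) (l : ℝ → ℝ) (hmeas : Measurable l)
    (h0 : ∀ ν, 0 ≤ l ν) (hb : ∀ ν, l ν ≤ Λ₀) (hc₁ : 0 < c₁)
    (hsmall : c₁ * Λ₀ ≤ N / 2) (s : ℝ) :
    ∫ t in Set.Ici (max s 0),
        (1 + t) * Real.exp (-N * t) * Real.exp (c₁ * ∫ ν in s..t, l ν)
      ≤ (2 / N) * (1 + max s 0) * Real.exp (-N * max s 0) *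
            Real.exp (c₁ * ∫ ν in s..(max s 0), l ν)
        + (4 / N ^ 2) * Real.exp (-N * max s 0) *
            Real.exp (c₁ * ∫ ν in s..(max s 0), l ν) := by
  have hl : ∀ u v, IntervalIntegrable l volume u v :=
    intervalIntegrable_of_norm_le hmeas.aestronglyMeasurable
      (fun ν => by rw [norm_of_nonneg (h0 ν)]; exact hb ν)
  have hbound := setIntegral_Ici_one_add_mul_exp_mul_le (N := N) (κ := N / 2) (m := max s 0)
    (D := fun t => exp (c₁ * ∫ ν in s..t, l ν)) (by linarith) (by linarith [le_max_right s 0])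
    (fun t _ => (exp_pos _).le)
    (fun t ht => exp_mul_integral_le hc₁.le hsmall (hl _ _) (hl _ _) hb ht.out)
  refine hbound.trans_eq ?_
  rw [show N - N / 2 = N / 2 by ring]
  field_simp
  ring
end

section
/- Let g : [0,∞) → [0,∞) be measurable, 0 < a ≤ b ≤ ∞, and u : ℝ^N → ℝ locally integrable. Then ∫_{a≤|y|≤b} (∫_{|y|/2}^{|y|} g(ρ) dρ/ρ)·|u(y)| dy ≤ ∫_{a/2}^{b} g(ρ)·(∫_{ρ≤|y|<2ρ} |u(y)| dy) dρ/ρ. -/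
/-!
Write the left side as the integral of `g(ρ)/ρ · |u(y)|` over the region `|y|/2 < ρ ≤ |y|`,
`y` in the annulus `a ≤ |y| ≤ b`, and integrate in `y` first (Tonelli). For fixed `ρ` the
`y`-slice lies in the shell `ρ ≤ |y| < 2ρ`, and it is empty unless `a/2 ≤ ρ ≤ b`.
-/

open Real MeasureTheory ENNReal

theorem lintegral_setLIntegral_mul_swap {α β : Type*} [MeasurableSpace α] [MeasurableSpace β]
    {μ : Measure α} {ν : Measure β} [SFinite μ] [SFinite ν] {I : α → Set β} {J : β → Set α}
    (hIJ : ∀ x y, y ∈ I x ↔ x ∈ J y) (hI : MeasurableSet {p : α × β | p.2 ∈ I p.1})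
    {f : β → ℝ≥0∞} {F : α → ℝ≥0∞} (hf : AEMeasurable f ν) (hF : AEMeasurable F μ) :
    ∫⁻ x, (∫⁻ y in I x, f y ∂ν) * F x ∂μ = ∫⁻ y, f y * ∫⁻ x in J y, F x ∂μ ∂ν := by
  set H := {p : α × β | p.2 ∈ I p.1}.indicator fun p => F p.1 * f p.2
  have hH : AEMeasurable H (μ.prod ν) := (hF.comp_fst.mul hf.comp_snd).indicator hI
  have h_left (x : α) : (∫⁻ y in I x, f y ∂ν) * F x = ∫⁻ y, H (x, y) ∂ν := by
    have hIx : MeasurableSet (I x) := measurable_prodMk_left hI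
    rw [← lintegral_mul_const'' _ hf.restrict, ← lintegral_indicator hIx]
    congr 1 with y
    by_cases hy : y ∈ I x <;> simp [H, hy, mul_comm]
  have h_right (y : β) : f y * ∫⁻ x in J y, F x ∂μ = ∫⁻ x, H (x, y) ∂μ := by
    have hJy : MeasurableSet (J y) := by
      simpa only [Set.preimage_ofPred_eq, hIJ, Set.ofPred_mem_eq] using
        (measurable_prodMk_right hI : MeasurableSet ((fun x => (x, y)) ⁻¹' _))
    rw [← lintegral_const_mul'' _ hF.restrict, ← lintegral_indicator hJy]
    congr 1 with x
    by_cases hx : x ∈ J y <;> simp [H, hIJ, hx, mul_comm]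
  simp_rw [h_left, h_right]
  exact lintegral_lintegral_swap hH

theorem lintegral_setLIntegral_Ioc_half_norm_mul {E : Type*} [NormedAddCommGroup E]
    [MeasurableSpace E] [OpensMeasurableSpace E] {μ : Measure E} [SFinite μ]
    {f : ℝ → ℝ≥0∞} {F : E → ℝ≥0∞} (hf : AEMeasurable f) (hF : AEMeasurable F μ) :
    ∫⁻ y, (∫⁻ ρ in Set.Ioc (‖y‖ / 2) ‖y‖, f ρ) * F y ∂μ
      = ∫⁻ ρ, f ρ * ∫⁻ y in {y | ρ ≤ ‖y‖ ∧ ‖y‖ < 2 * ρ}, F y ∂μ := by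
  refine lintegral_setLIntegral_mul_swap (fun y ρ => ?_) ?_ hf hF
  · simp only [Set.mem_Ioc, Set.mem_ofPred_eq]
    constructor <;> rintro ⟨h1, h2⟩ <;> constructor <;> linarith
  · have h_norm : Measurable fun p : E × ℝ => ‖p.1‖ := measurable_norm.comp measurable_fst
    exact (measurableSet_lt (h_norm.div_const 2) measurable_snd).inter
      (measurableSet_le measurable_snd h_norm)

theorem lintegral_mul_setLIntegral_restrict_le {α β : Type*} [MeasurableSpace α]
    [MeasurableSpace β] {μ : Measure α} {ν : Measure β} {A : Set α} {R : Set β} {J : β → Set α}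
    (hA : MeasurableSet A) (hR : MeasurableSet R) (hJA : ∀ y, (J y ∩ A).Nonempty → y ∈ R)
    (f : β → ℝ≥0∞) (F : α → ℝ≥0∞) :
    ∫⁻ y, f y * ∫⁻ x in J y, F x ∂μ.restrict A ∂ν ≤ ∫⁻ y in R, f y * ∫⁻ x in J y, F x ∂μ ∂ν := by
  rw [← lintegral_indicator hR]
  refine lintegral_mono fun y => ?_
  by_cases hy : y ∈ R
  · rw [Set.indicator_of_mem hy]
    gcongr
    exact Measure.restrict_le_self
  · have h_empty : J y ∩ A = ∅ := Set.not_nonempty_iff_eq_empty.mp (mt (hJA y) hy)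
    rw [Set.indicator_of_notMem hy, Measure.restrict_eq_zero.mpr, lintegral_zero_measure, mul_zero]
    rw [Measure.restrict_apply' hA, h_empty, measure_empty]

theorem stmt19_general (N : ℕ) (g : ℝ → ℝ) (hg : Measurable g)
    (u : EuclideanSpace ℝ (Fin N) → ℝ)
    (hu : MeasureTheory.LocallyIntegrable u volume)
    (a : ℝ) (b : ℝ≥0∞) :
    (∫⁻ y in {y : EuclideanSpace ℝ (Fin N) | a ≤ ‖y‖ ∧ (‖y‖₊ : ℝ≥0∞) ≤ b},
        (∫⁻ ρ in Set.Ioc (‖y‖ / 2) ‖y‖, ENNReal.ofReal (g ρ / ρ)) *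
          ENNReal.ofReal |u y|)
      ≤ ∫⁻ ρ in {ρ : ℝ | a / 2 ≤ ρ ∧ ENNReal.ofReal ρ ≤ b},
          ENNReal.ofReal (g ρ / ρ) *
            ∫⁻ y in {y : EuclideanSpace ℝ (Fin N) | ρ ≤ ‖y‖ ∧ ‖y‖ < 2 * ρ},
              ENNReal.ofReal |u y| := by
  have hA : MeasurableSet {y : EuclideanSpace ℝ (Fin N) | a ≤ ‖y‖ ∧ (‖y‖₊ : ℝ≥0∞) ≤ b} :=
    (measurableSet_le measurable_const measurable_norm).inter
      (measurable_nnnorm.coe_nnreal_ennreal measurableSet_Iic)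
  have hR : MeasurableSet {ρ : ℝ | a / 2 ≤ ρ ∧ ENNReal.ofReal ρ ≤ b} :=
    (measurableSet_le measurable_const measurable_id).inter
      (ENNReal.measurable_ofReal measurableSet_Iic)
  have hf : AEMeasurable fun ρ => ENNReal.ofReal (g ρ / ρ) := by fun_prop
  have hF : AEMeasurable fun y => ENNReal.ofReal |u y| :=
    hu.aestronglyMeasurable.aemeasurable.abs.ennreal_ofReal
  rw [lintegral_setLIntegral_Ioc_half_norm_mul hf hF.restrict]
  refine lintegral_mul_setLIntegral_restrict_le hA hR ?_ _ _
  rintro ρ ⟨y, ⟨hρy, hy2ρ⟩, hay, hyb⟩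
  refine ⟨by linarith, ?_⟩
  calc ENNReal.ofReal ρ ≤ ENNReal.ofReal ‖y‖ := ENNReal.ofReal_le_ofReal hρy
    _ = ‖y‖₊ := (ofReal_norm y).trans (enorm_eq_nnnorm y)
    _ ≤ b := hyb

theorem stmt19 (N : ℕ) (hN : 1 ≤ N) (g : ℝ → ℝ) (hg : Measurable g)
    (hg0 : ∀ ρ, 0 ≤ g ρ) (u : EuclideanSpace ℝ (Fin N) → ℝ)
    (hu : MeasureTheory.LocallyIntegrable u volume)
    (a : ℝ) (b : ℝ≥0∞) (ha : 0 < a) (hab : ENNReal.ofReal a ≤ b) :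
    (∫⁻ y in {y : EuclideanSpace ℝ (Fin N) | a ≤ ‖y‖ ∧ (‖y‖₊ : ℝ≥0∞) ≤ b},
        (∫⁻ ρ in Set.Ioc (‖y‖ / 2) ‖y‖, ENNReal.ofReal (g ρ / ρ)) *
          ENNReal.ofReal |u y|)
      ≤ ∫⁻ ρ in {ρ : ℝ | a / 2 ≤ ρ ∧ ENNReal.ofReal ρ ≤ b},
          ENNReal.ofReal (g ρ / ρ) *
            ∫⁻ y in {y : EuclideanSpace ℝ (Fin N) | ρ ≤ ‖y‖ ∧ ‖y‖ < 2 * ρ},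
              ENNReal.ofReal |u y| :=
  stmt19_general N g hg u hu a b
end
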